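/- arXiv:1304.3687 — 2 statements merged into one kernel-verified Lean document; each statement's English description precedes it below -/
import Mathlib

section
/- Let R = ℂ[x,x⁻¹,y,y⁻¹], let B ⊆ R be the ℂ-subspace spanned by the monomials xⁱyʲ with i ≥ 0 and j ∈ ℤ, and let n be an even natural number. Consider V′ = x⁻ⁿB/xB with the ℂ-bilinear pairing β′ induced by (f,g) ↦ x^{n−1}y⁻¹fg, valued in R/B. Then M = x^{1−n/2}B/xB is totally isotropic for β′, its orthogonal complement M^⊥ = {v ∈ V′ : β′(v,u) = 0 for all u ∈ M} equals x^{−n/2}B/xB, and the ℂ-linear map ℂ[y,y⁻¹] → M^⊥/M sending h to the class of x^{−n/2}h is bijective. -/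
noncomputable section

/-- The Laurent polynomial ring `ℂ[x,x⁻¹,y,y⁻¹]` as the monoid algebra of `ℤ × ℤ` over `ℂ`. -/
abbrev LaurentR : Type := AddMonoidAlgebra ℂ (ℤ × ℤ)

/-- The monomial `xⁱyʲ`. -/
def mono (i j : ℤ) : LaurentR := AddMonoidAlgebra.single (i, j) 1

/-- `x` -/
def xx : LaurentR := mono 1 0
/-- `x⁻¹` -/
def xxInv : LaurentR := mono (-1) 0
/-- `y` -/
def yy : LaurentR := mono 0 1
/-- `y⁻¹` -/
def yyInv : LaurentR := mono 0 (-1)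

/-- `A = ℂ[x,y]`, the ℂ-subspace spanned by monomials `xⁱyʲ` with `i ≥ 0`, `j ≥ 0`. -/
def Asub : Submodule ℂ LaurentR := Submodule.span ℂ {r | ∃ (i : ℕ) (j : ℕ), r = mono i j}
/-- `B = ℂ[x,y,y⁻¹]`, the ℂ-subspace spanned by monomials `xⁱyʲ` with `i ≥ 0`, `j ∈ ℤ`. -/
def Bsub : Submodule ℂ LaurentR := Submodule.span ℂ {r | ∃ (i : ℕ) (j : ℤ), r = mono i j}
/-- `C = ℂ[x,x⁻¹,y]`, the ℂ-subspace spanned by monomials `xⁱyʲ` with `i ∈ ℤ`, `j ≥ 0`. -/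
def Csub : Submodule ℂ LaurentR := Submodule.span ℂ {r | ∃ (i : ℤ) (j : ℕ), r = mono i j}
/-- `ℂ[y,y⁻¹]`, the ℂ-subspace spanned by the monomials `yʲ`, `j ∈ ℤ`. -/
def Dy : Submodule ℂ LaurentR := Submodule.span ℂ {r | ∃ (j : ℤ), r = mono 0 j}
/-- `ℂ[x,x⁻¹]`, the ℂ-subspace spanned by the monomials `xⁱ`, `i ∈ ℤ`. -/
def Dx : Submodule ℂ LaurentR := Submodule.span ℂ {r | ∃ (i : ℤ), r = mono i 0}

/-- `u·L = {u·f : f ∈ L}` as a `ℂ`-submodule of `LaurentR`. -/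
def dil (u : LaurentR) (L : Submodule ℂ LaurentR) : Submodule ℂ LaurentR :=
  L.map (LinearMap.mulLeft ℂ u)

/-!
Everything happens inside the lattices `xᵃB`, which are the Laurent polynomials whose monomials
`xⁱyʲ` all have `i ≥ a`. They satisfy `xᵃB · xᵇB ⊆ x^{a+b}B`, and multiplication by the unit
`xᵃyᵇ` carries `xᶜB` onto `x^{a+c}B`. Hence `x^{n-1}y⁻¹ · x^{1-n/2}B · x^{1-n/2}B ⊆ xB ⊆ B`, and
testing `v` against `u = x^{1-n/2}` alone already forces `v ∈ x^{-(n-1)-(1-n/2)}B = x^{-n/2}B`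
(this is where `n` even enters).
Finally `xᵃB = xᵃ ℂ[y,y⁻¹] ⊕ x^{a+1}B`, so `h ↦ [xᵃh]` is a bijection
`ℂ[y,y⁻¹] ≃ xᵃB/x^{a+1}B`.
-/

namespace AddMonoidAlgebra

variable {R S M : Type*} [Semiring R] [Semiring S] [Module R S]

lemma supported_union (s t : Set M) :
    supported R S (s ∪ t) = supported R S s ⊔ supported R S t := by
  simp only [supported_eq_map, Finsupp.supported_union, Submodule.map_sup]

end AddMonoidAlgebra

open AddMonoidAlgebra

lemma mono_mul (i j i' j' : ℤ) : mono i j * mono i' j' = mono (i + i') (j + j') := by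
  simp [mono, single_mul_single, Prod.mk_add_mk]

lemma mono_pow (k : ℕ) (i j : ℤ) : mono i j ^ k = mono (k * i) (k * j) := by
  simp [mono, single_pow, Prod.smul_mk]

/-- The lattice `xᵃB`. -/
def xPowB (a : ℤ) : Submodule ℂ LaurentR := supported ℂ ℂ {p : ℤ × ℤ | a ≤ p.1}

lemma mem_xPowB {a : ℤ} {f : LaurentR} : f ∈ xPowB a ↔ ∀ p : ℤ × ℤ, f.coeff p ≠ 0 → a ≤ p.1 := by
  simp [xPowB, mem_supported, Set.subset_def]

lemma xPowB_antitone : Antitone xPowB :=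
  fun _ _ h => supported_mono fun _ hp => le_trans h hp

lemma mono_mem_xPowB {a i : ℤ} (h : a ≤ i) (j : ℤ) : mono i j ∈ xPowB a := by
  rw [mem_xPowB]
  intro p hp
  rcases eq_or_ne ((i, j) : ℤ × ℤ) p with rfl | hne
  · exact h
  · exact absurd (Finsupp.single_eq_of_ne' hne) hp

lemma mul_mem_xPowB {a b c : ℤ} {f g : LaurentR} (hf : f ∈ xPowB a) (hg : g ∈ xPowB b)
    (hc : c ≤ a + b) : f * g ∈ xPowB c := by
  classical
  rw [mem_xPowB] at hf hg ⊢
  intro p hp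
  obtain ⟨q, hq, s, hs, rfl⟩ :=
    Finset.mem_add.mp (support_coeff_mul_subset f g (Finsupp.mem_support_iff.mpr hp))
  have hq1 := hf q (Finsupp.mem_support_iff.mp hq)
  have hs1 := hg s (Finsupp.mem_support_iff.mp hs)
  exact hc.trans (add_le_add hq1 hs1)

lemma mono_mul_mem_xPowB_iff {a c : ℤ} (b : ℤ) {f : LaurentR} :
    mono a b * f ∈ xPowB c ↔ f ∈ xPowB (c - a) := by
  refine ⟨fun h => ?_, fun h => mul_mem_xPowB (mono_mem_xPowB le_rfl b) h (by omega)⟩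
  have hf : f = mono (-a) (-b) * (mono a b * f) := by
    rw [← mul_assoc, mono_mul, neg_add_cancel, neg_add_cancel]
    exact (one_mul f).symm
  rw [hf]
  exact mul_mem_xPowB (mono_mem_xPowB le_rfl _) h (by omega)

lemma Bsub_eq_xPowB_zero : Bsub = xPowB 0 := by
  rw [Bsub, xPowB, supported_eq_span_single]
  congr 1
  ext r
  constructor
  · rintro ⟨i, j, rfl⟩
    exact ⟨(i, j), Int.natCast_nonneg i, rfl⟩
  · rintro ⟨⟨i, j⟩, h, rfl⟩
    exact ⟨i.toNat, j, by rw [Int.toNat_of_nonneg h]; rfl⟩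

lemma dil_mono_Bsub (a b : ℤ) : dil (mono a b) Bsub = xPowB a := by
  ext f
  rw [dil, Bsub_eq_xPowB_zero, Submodule.mem_map]
  constructor
  · rintro ⟨g, hg, rfl⟩
    exact (mono_mul_mem_xPowB_iff b).mpr (by simpa using hg)
  · intro hf
    refine ⟨mono (-a) (-b) * f, (mono_mul_mem_xPowB_iff _).mpr (by simpa using hf), ?_⟩
    rw [LinearMap.mulLeft_apply, ← mul_assoc, mono_mul, add_neg_cancel, add_neg_cancel]
    exact one_mul f

lemma forall_mono_mul_mem_xPowB_zero_iff (a c d : ℤ) (v : LaurentR) :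
    (∀ u ∈ xPowB a, mono c d * (v * u) ∈ xPowB 0) ↔ v ∈ xPowB (-(c + a)) := by
  refine ⟨fun H => ?_, fun hv u hu =>
    mul_mem_xPowB (mono_mem_xPowB le_rfl d) (mul_mem_xPowB hv hu le_rfl) (by omega)⟩
  have h := H _ (mono_mem_xPowB le_rfl 0)
  rw [mul_comm v, ← mul_assoc, mono_mul, add_zero, mono_mul_mem_xPowB_iff, zero_sub] at h
  exact h

lemma Dy_eq_supported : Dy = supported ℂ ℂ {p : ℤ × ℤ | p.1 = 0} := by
  rw [Dy, supported_eq_span_single]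
  congr 1
  ext r
  constructor
  · rintro ⟨j, rfl⟩
    exact ⟨(0, j), rfl, rfl⟩
  · rintro ⟨⟨i, j⟩, rfl : i = 0, rfl⟩
    exact ⟨j, rfl⟩

lemma xPowB_zero_eq_Dy_sup : xPowB 0 = Dy ⊔ xPowB 1 := by
  rw [Dy_eq_supported, xPowB, xPowB, ← supported_union]
  congr 1
  ext p
  simp only [Set.mem_union, Set.mem_ofPred_eq]
  omega

lemma eq_zero_of_mem_Dy_of_mem_xPowB_one {h : LaurentR} (hDy : h ∈ Dy) (h1 : h ∈ xPowB 1) :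
    h = 0 := by
  rw [Dy_eq_supported, mem_supported'] at hDy
  ext p
  by_contra hp
  have hp1 := mem_xPowB.mp h1 p hp
  exact hp (hDy p (by simp only [Set.mem_ofPred_eq]; omega))

lemma mkQ_mono_mul_injective (a : ℤ) :
    Function.Injective (fun h : Dy => (xPowB (a + 1)).mkQ (mono a 0 * (h : LaurentR))) := by
  intro h₁ h₂ heq
  simp only [Submodule.mkQ_apply, Submodule.Quotient.eq, ← mul_sub,
    mono_mul_mem_xPowB_iff, add_sub_cancel_left] at heq
  exact Subtype.ext (sub_eq_zero.mp (eq_zero_of_mem_Dy_of_mem_xPowB_one (sub_mem h₁.2 h₂.2) heq))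

lemma range_mkQ_mono_mul (a : ℤ) :
    Set.range (fun h : Dy => (xPowB (a + 1)).mkQ (mono a 0 * (h : LaurentR)))
      = ((xPowB a).map (xPowB (a + 1)).mkQ : Set (LaurentR ⧸ xPowB (a + 1))) := by
  ext z
  simp only [Set.mem_range, Submodule.map_coe, Set.mem_image, SetLike.mem_coe]
  constructor
  · rintro ⟨h, rfl⟩
    refine ⟨_, (mono_mul_mem_xPowB_iff 0).mpr ?_, rfl⟩
    rw [sub_self, xPowB_zero_eq_Dy_sup]
    exact Submodule.mem_sup_left h.2
  · rintro ⟨v, hv, rfl⟩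
    have hv₀ : mono (-a) 0 * v ∈ Dy ⊔ xPowB 1 := by
      rw [← xPowB_zero_eq_Dy_sup, mono_mul_mem_xPowB_iff]
      simpa using hv
    obtain ⟨h, hh, r, hr, hsum⟩ := Submodule.mem_sup.mp hv₀
    have hv : v = mono a 0 * (h + r) := by
      rw [hsum, ← mul_assoc, mono_mul, add_neg_cancel, add_zero]
      exact (one_mul v).symm
    refine ⟨⟨h, hh⟩, (Submodule.Quotient.eq _).mpr ?_⟩
    have hdiff : mono a 0 * h - v = -(mono a 0 * r) := by
      rw [hv]
      ring
    rw [hdiff, neg_mem_iff, mono_mul_mem_xPowB_iff, add_sub_cancel_left]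
    exact hr

/-- For `n` even, in `V' = x⁻ⁿB/xB` with the pairing `β'` induced by
`(f,g) ↦ x^{n-1}y⁻¹fg` (valued in `R/B`): the submodule `M = x^{1-n/2}B/xB` is totally
isotropic, its orthogonal complement equals `x^{-n/2}B/xB`, and the ℂ-linear map
`ℂ[y,y⁻¹] → M^⊥/M`, `h ↦ [x^{-n/2}h]`, is bijective (injective with range the image of the
lattice `x^{-n/2}B` in `R/x^{1-n/2}B`). Here `x^{1-n/2}` is written `x·x^{-n/2}` and
`x^{n-1}` is written `xⁿ·x⁻¹`. -/
theorem stmt_7 (n : ℕ) (hn : Even n) :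
    (∀ u ∈ dil (xx * xxInv ^ (n / 2)) Bsub, ∀ v ∈ dil (xx * xxInv ^ (n / 2)) Bsub,
        xx ^ n * xxInv * yyInv * (u * v) ∈ Bsub) ∧
    ({v : LaurentR | v ∈ dil (xxInv ^ n) Bsub ∧
        ∀ u ∈ dil (xx * xxInv ^ (n / 2)) Bsub, xx ^ n * xxInv * yyInv * (v * u) ∈ Bsub}
      = (dil (xxInv ^ (n / 2)) Bsub : Set LaurentR)) ∧
    Function.Injective (fun h : Dy =>
      (dil (xx * xxInv ^ (n / 2)) Bsub).mkQ (xxInv ^ (n / 2) * (h : LaurentR))) ∧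
    Set.range (fun h : Dy =>
      (dil (xx * xxInv ^ (n / 2)) Bsub).mkQ (xxInv ^ (n / 2) * (h : LaurentR)))
      = ((dil (xxInv ^ (n / 2)) Bsub).map (dil (xx * xxInv ^ (n / 2)) Bsub).mkQ :
          Set (LaurentR ⧸ dil (xx * xxInv ^ (n / 2)) Bsub)) := by
  obtain ⟨m, rfl⟩ := hn
  have hx : ∀ k : ℕ, xxInv ^ k = mono (-k) 0 := fun k => by
    rw [xxInv, mono_pow]; congr 1; ring
  have hmid : xxInv ^ ((m + m) / 2) = mono (-m) 0 := by
    rw [hx]; congr; omega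
  have hM : dil (xx * xxInv ^ ((m + m) / 2)) Bsub = xPowB (-m + 1) := by
    rw [hmid, xx, mono_mul, dil_mono_Bsub, add_comm]
  have hc : xx ^ (m + m) * xxInv * yyInv = mono (m + m - 1) (-1) := by
    rw [xx, xxInv, yyInv, mono_pow, mono_mul, mono_mul]; congr 1; push_cast; ring
  rw [hM, hx, hmid, hc, dil_mono_Bsub, dil_mono_Bsub, Bsub_eq_xPowB_zero]
  refine ⟨fun u hu v hv => mul_mem_xPowB (mono_mem_xPowB le_rfl _) (mul_mem_xPowB hu hv le_rfl)
      (by omega), ?_, mkQ_mono_mul_injective _, range_mkQ_mono_mul _⟩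
  ext v
  simp only [Set.mem_ofPred_eq, SetLike.mem_coe, forall_mono_mul_mem_xPowB_zero_iff]
  exact ⟨fun hv => xPowB_antitone (by omega) hv.2,
    fun hv => ⟨xPowB_antitone (by omega) hv, xPowB_antitone (by omega) hv⟩⟩
end
end

section
/- Let R = ℂ[x,x⁻¹,y,y⁻¹], and let A, C ⊆ R be the ℂ-subspaces spanned by the monomials xⁱyʲ with i ≥ 0, j ≥ 0 (A) and with i ∈ ℤ, j ≥ 0 (C). Then for every natural number n, the ℂ-vector space (x⁻ⁿy⁻¹A + C)/(x·y⁻¹A + C) has dimension n + 1 over ℂ. (This is the computation dim M′/M = n+1 for the integral lattice M = (z/w̄)·ℂ[z,w̄] + ℂ[z,w̄,1/z] and its dual in the ⟨x⟩-column of d¹ on the chart U_{σ₄}, showing the corresponding matrix entry is 0 if and only if n is odd.) -/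
noncomputable section

/-!
Everything in sight is spanned by monomials: `A`, `C` and their translates by the monomials
`x⁻ⁿy⁻¹` and `xy⁻¹` are the spans of the monomials whose exponents lie in a quadrant, a half-plane
or a translated quadrant, and a sum of such spans is the span over the union of the exponent sets.
The exponent set of `x⁻ⁿy⁻¹A + C` is the disjoint union of that of `xy⁻¹A + C` and the segment
`[-n, 0] × {-1}`. Since the monomials are linearly independent, the quotient has the images of the
`n + 1` monomials `xⁱy⁻¹`, `-n ≤ i ≤ 0`, as a basis.
-/

open Module Submodule
open scoped Pointwise

theorem finrank_map_mkQ_span_image_union {K V ι : Type*} [DivisionRing K] [AddCommGroup V]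
    [Module K V] {v : ι → V} (hv : LinearIndependent K v) {s : Finset ι} {t : Set ι}
    (hst : Disjoint (s : Set ι) t) :
    finrank K ((span K (v '' (↑s ∪ t))).map (span K (v '' t)).mkQ) = s.card := by
  rw [Set.image_union, span_union, Submodule.map_sup, mkQ_map_self, sup_bot_eq]
  have hinj : Function.Injective ((span K (v '' t)).mkQ ∘ₗ (span K (v '' s)).subtype) := by
    rw [← LinearMap.ker_eq_bot, LinearMap.ker_comp, ker_mkQ, ← disjoint_iff_comap_eq_bot]
    exact hv.disjoint_span_image hst
  rw [← range_subtype (span K (v '' s)), ← LinearMap.range_comp,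
    LinearMap.finrank_range_of_inj hinj, Set.image_eq_range]
  exact (finrank_span_eq_card (hv.comp _ Subtype.val_injective)).trans (Fintype.card_coe s)

def monoSpan (s : Set (ℤ × ℤ)) : Submodule ℂ LaurentR :=
  span ℂ ((fun p => mono p.1 p.2) '' s)

theorem linearIndependent_mono : LinearIndependent ℂ (fun p : ℤ × ℤ => mono p.1 p.2) :=
  (AddMonoidAlgebra.basis (ℤ × ℤ) ℂ).linearIndependent

theorem monoSpan_union (s t : Set (ℤ × ℤ)) : monoSpan (s ∪ t) = monoSpan s ⊔ monoSpan t := by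
  rw [monoSpan, Set.image_union, span_union]
  rfl

theorem mono_mul_s10 (a b c d : ℤ) : mono a b * mono c d = mono (a + c) (b + d) := by
  simp [mono, AddMonoidAlgebra.single_mul_single]

theorem dil_mono_monoSpan (a b : ℤ) (s : Set (ℤ × ℤ)) :
    dil (mono a b) (monoSpan s) = monoSpan ((a, b) +ᵥ s) := by
  rw [dil, monoSpan, monoSpan, map_span, ← Set.image_vadd, ← Set.image_comp, ← Set.image_comp]
  congr 2
  funext p
  exact mono_mul_s10 a b p.1 p.2

theorem xxInv_pow (n : ℕ) : xxInv ^ n = mono (-n) 0 := by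
  induction n with
  | zero => rfl
  | succ n ih =>
    rw [pow_succ, ih, xxInv, mono_mul_s10]
    push_cast
    ring_nf

theorem xxInv_pow_mul_yyInv (n : ℕ) : xxInv ^ n * yyInv = mono (-n) (-1) := by
  rw [xxInv_pow, yyInv, mono_mul_s10, add_zero, zero_add]

theorem xx_mul_yyInv : xx * yyInv = mono 1 (-1) := by
  rw [xx, yyInv, mono_mul_s10, add_zero, zero_add]

theorem Asub_eq_monoSpan : Asub = monoSpan {p | 0 ≤ p.1 ∧ 0 ≤ p.2} := by
  rw [Asub, monoSpan]
  congr 1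
  ext r
  constructor
  · rintro ⟨i, j, rfl⟩
    exact ⟨(i, j), ⟨i.cast_nonneg, j.cast_nonneg⟩, rfl⟩
  · rintro ⟨⟨i, j⟩, ⟨hi, hj⟩, rfl⟩
    lift i to ℕ using hi
    lift j to ℕ using hj
    exact ⟨i, j, rfl⟩

theorem Csub_eq_monoSpan : Csub = monoSpan {p | 0 ≤ p.2} := by
  rw [Csub, monoSpan]
  congr 1
  ext r
  constructor
  · rintro ⟨i, j, rfl⟩
    exact ⟨(i, j), Nat.cast_nonneg (α := ℤ) j, rfl⟩
  · rintro ⟨⟨i, j⟩, hj, rfl⟩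
    lift j to ℕ using hj
    exact ⟨i, j, rfl⟩

/-- For every `n : ℕ`, the ℂ-vector space
`(x⁻ⁿy⁻¹A + C)/(x·y⁻¹A + C)` has dimension `n + 1` over `ℂ`
(realized as the image of `x⁻ⁿy⁻¹A + C` in `R/(x·y⁻¹A + C)`). -/
theorem stmt_10 (n : ℕ) :
    Module.finrank ℂ
      ↥((dil (xxInv ^ n * yyInv) Asub ⊔ Csub).map (dil (xx * yyInv) Asub ⊔ Csub).mkQ)
      = n + 1 := by
  set Q : Set (ℤ × ℤ) := {p | 0 ≤ p.1 ∧ 0 ≤ p.2} with hQ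
  set H : Set (ℤ × ℤ) := {p | 0 ≤ p.2} with hH
  set T : Finset (ℤ × ℤ) := Finset.Icc (-n : ℤ) 0 ×ˢ {-1} with hT
  have hN : ((-(n : ℤ), -1) +ᵥ Q) ∪ H = ↑T ∪ ((((1 : ℤ), -1) +ᵥ Q) ∪ H) := by
    ext ⟨i, j⟩
    simp only [hQ, hH, hT, Set.mem_union, Set.mem_vadd_set_iff_neg_vadd_mem, Finset.coe_product,
      Set.mem_prod, Finset.coe_Icc, Set.mem_Icc, Finset.coe_singleton, Set.mem_singleton_iff,
      Prod.neg_mk, neg_neg, vadd_eq_add, Prod.mk_add_mk, Set.mem_ofPred_eq]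
    omega
  have hdisj : Disjoint (T : Set (ℤ × ℤ)) ((((1 : ℤ), -1) +ᵥ Q) ∪ H) := by
    rw [Set.disjoint_left]
    rintro ⟨i, j⟩
    simp only [hQ, hH, hT, Set.mem_union, Set.mem_vadd_set_iff_neg_vadd_mem, Finset.coe_product,
      Set.mem_prod, Finset.coe_Icc, Set.mem_Icc, Finset.coe_singleton, Set.mem_singleton_iff,
      Prod.neg_mk, neg_neg, vadd_eq_add, Prod.mk_add_mk, Set.mem_ofPred_eq]
    omega
  rw [xxInv_pow_mul_yyInv, xx_mul_yyInv, Asub_eq_monoSpan, Csub_eq_monoSpan, dil_mono_monoSpan,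
    dil_mono_monoSpan, ← monoSpan_union, ← monoSpan_union, hN, monoSpan, monoSpan,
    finrank_map_mkQ_span_image_union linearIndependent_mono hdisj, hT, Finset.card_product,
    Int.card_Icc, Finset.card_singleton]
  omega
end
end
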